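/- Let π : H → ℤ be any function satisfying π(t^p · b^q · ι(w)) = q for all p, q ∈ ℤ and all w ∈ F₂ not beginning with b^{±1}. Then for all u, u' ∈ H the following are equivalent: (1) π(u⁻¹ · u' · bⁿ) = π(u⁻¹ · u') + n for all n ∈ ℤ; (2) π(u'⁻¹ · u · bⁿ) = π(u'⁻¹ · u) + n for all n ∈ ℤ; (3) there exist p, q ∈ ℤ with u' = u · t^p · b^q. (This shows the relation of parallelism between the cosets u⟨b⟩ and u'⟨b⟩ is symmetric.) -/

import Mathlib

/-- Generators of `H`: `a = 0`, `b = 1`, `t = 2`.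
Relators: `t·b·t⁻¹·b⁻¹` and `t·a·t⁻¹·a⁻¹·b⁻¹`. -/
def hRels : Set (FreeGroup (Fin 3)) :=
  { FreeGroup.of (2 : Fin 3) * FreeGroup.of (1 : Fin 3) * (FreeGroup.of (2 : Fin 3))⁻¹ *
      (FreeGroup.of (1 : Fin 3))⁻¹,
    FreeGroup.of (2 : Fin 3) * FreeGroup.of (0 : Fin 3) * (FreeGroup.of (2 : Fin 3))⁻¹ *
      (FreeGroup.of (0 : Fin 3))⁻¹ * (FreeGroup.of (1 : Fin 3))⁻¹ }

/-- The group `H = ⟨a, b, t ∣ t·b·t⁻¹ = b, t·a·t⁻¹ = b·a⟩`. -/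
abbrev HGrp : Type := PresentedGroup hRels

/-- The image of the generator `a` in `H`. -/
def aH : HGrp := PresentedGroup.of 0
/-- The image of the generator `b` in `H`. -/
def bH : HGrp := PresentedGroup.of 1
/-- The image of the generator `t` in `H`. -/
def tH : HGrp := PresentedGroup.of 2

/-- The free group on two generators `a = 0`, `b = 1`. -/
abbrev F₂ : Type := FreeGroup (Fin 2)

/-- `w ∈ F₂` does not begin with `b` or `b⁻¹`: the first letter of its reduced word
(if any) is not the generator `b = 1`. -/
def NoLeadB (w : F₂) : Prop := ∀ l ∈ w.toWord.head?, l.1 ≠ (1 : Fin 2)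

/-- The homomorphism `ι : F₂ →* H` sending the generators `a`, `b` of `F₂` to the
elements `a`, `b` of `H`. -/
def ι : F₂ →* HGrp := FreeGroup.lift (fun i => if i = 0 then aH else bH)

/-!
Since conjugation by `t` restricts to the automorphism `a ↦ ba`, `b ↦ b` of `ι(F₂)`, the subgroup
`ι(F₂)` is normal, so every element of `H` can be written `t^p · b^q · ι(w)` with `w` not beginning
with `b^{±1}`. If `w ≠ 1`, a letter `b^{±1}` can be appended to `w` without cancellation; this moves
`g = t^p · b^q · ι(w)` along `g⟨b⟩` without changing `π`. Hence `π` is a translation on `g⟨b⟩`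
exactly when `g = t^p · b^q`. These elements are closed under inversion because `t` and `b` commute,
and applying this to `g = u⁻¹u'` and `g⁻¹ = u'⁻¹u` gives the equivalences.
-/

namespace FreeGroup

variable {α : Type*}

lemma mk_singleton_eq_zpow (a : α) (s : Bool) :
    mk [(a, s)] = of a ^ (if s then (1 : ℤ) else -1) := by
  cases s
  · simp [of, inv_mk, invRev]
  · simp [of]

variable [DecidableEq α]

lemma exists_eq_zpow_mul_of_head?_ne (a : α) (w : FreeGroup α) :
    ∃ (q : ℤ) (w' : FreeGroup α), (∀ l ∈ w'.toWord.head?, l.1 ≠ a) ∧ w = of a ^ q * w' := by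
  suffices h : ∀ L : List (α × Bool), IsReduced L →
      ∃ (q : ℤ) (w' : FreeGroup α), (∀ l ∈ w'.toWord.head?, l.1 ≠ a) ∧ mk L = of a ^ q * w' by
    simpa only [mk_toWord] using h w.toWord isReduced_toWord
  intro L hL
  induction L with
  | nil => exact ⟨0, 1, by simp, by simp [one_eq_mk]⟩
  | cons x L ih =>
    obtain ⟨x, s⟩ := x
    by_cases hx : x = a
    · subst hx
      obtain ⟨q, w', hw', he⟩ := ih hL.tail
      refine ⟨(if s then 1 else -1) + q, w', hw', ?_⟩
      rw [zpow_add, mul_assoc, ← he, ← mk_singleton_eq_zpow, mul_mk]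
      rfl
    · refine ⟨0, mk ((x, s) :: L), ?_, by simp⟩
      rw [toWord_mk, hL.reduce_eq]
      simpa using hx

lemma exists_toWord_mul_mk_singleton (a : α) (w : FreeGroup α) :
    ∃ s : Bool, (w * mk [(a, s)]).toWord = w.toWord ++ [(a, s)] := by
  obtain ⟨s, hs⟩ : ∃ s : Bool, ∀ x ∈ w.toWord.getLast?, x.1 = a → x.2 = s := by
    rcases w.toWord.getLast? with _ | ⟨x, s⟩
    · exact ⟨true, by simp⟩
    · exact ⟨s, by simp⟩
  refine ⟨s, ?_⟩
  have hred : IsReduced (w.toWord ++ [(a, s)]) :=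
    List.isChain_append.mpr ⟨isReduced_toWord, .singleton _, by simpa using hs⟩
  rw [← hred.reduce_eq, ← toWord_mk, ← mul_mk, mk_toWord]

end FreeGroup

open FreeGroup (of)

lemma tH_mul_bH_mul_inv : tH * bH * tH⁻¹ = bH :=
  PresentedGroup.mk_eq_mk_of_mul_inv_mem (Set.mem_insert _ _)

lemma tH_mul_aH_mul_inv : tH * aH * tH⁻¹ = bH * aH := by
  have h : tH * aH * tH⁻¹ * aH⁻¹ = bH :=
    PresentedGroup.mk_eq_mk_of_mul_inv_mem (Set.mem_insert_of_mem _ rfl)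
  rw [← h, inv_mul_cancel_right]

lemma commute_tH_bH : Commute tH bH :=
  mul_inv_eq_iff_eq_mul.mp tH_mul_bH_mul_inv

lemma ι_of_zero : ι (of 0) = aH := by simp [ι]

lemma ι_of_one : ι (of 1) = bH := by simp [ι]

def tConj : F₂ →* F₂ := FreeGroup.lift ![of 1 * of 0, of 1]

lemma conj_tH_comp_ι : (MulAut.conj tH : HGrp →* HGrp).comp ι = ι.comp tConj := by
  refine FreeGroup.ext_hom _ _ fun i => ?_
  fin_cases i
  · simp [tConj, ι_of_zero, ι_of_one, tH_mul_aH_mul_inv]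
  · simp [tConj, ι_of_one, tH_mul_bH_mul_inv]

lemma tConj_range : tConj.range = ⊤ := by
  rw [eq_top_iff, ← FreeGroup.closure_range_of, Subgroup.closure_le]
  rintro _ ⟨i, rfl⟩
  fin_cases i
  · exact ⟨(of 1)⁻¹ * of 0, by simp [tConj]⟩
  · exact ⟨of 1, by simp [tConj]⟩

instance ι_range_normal : ι.range.Normal := by
  rw [← Subgroup.normalizer_eq_top_iff, eq_top_iff, ← PresentedGroup.closure_range_of,
    Subgroup.closure_le]
  rintro _ ⟨i, rfl⟩
  fin_cases i
  · exact Subgroup.le_normalizer ⟨of 0, ι_of_zero⟩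
  · exact Subgroup.le_normalizer ⟨of 1, ι_of_one⟩
  · change tH ∈ Subgroup.normalizer ι.range
    rw [Subgroup.mem_normalizer_iff_map_conj_eq, MonoidHom.map_range, conj_tH_comp_ι,
      MonoidHom.range_comp, tConj_range, ← MonoidHom.range_eq_map]

lemma exists_eq_tH_zpow_mul_ι (g : HGrp) : ∃ (p : ℤ) (v : F₂), g = tH ^ p * ι v := by
  have hg : g ∈ Subgroup.zpowers tH ⊔ ι.range := by
    refine PresentedGroup.generated_by hRels _ (fun i => ?_) g
    fin_cases i
    · exact Subgroup.mem_sup_right ⟨of 0, ι_of_zero⟩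
    · exact Subgroup.mem_sup_right ⟨of 1, ι_of_one⟩
    · exact Subgroup.mem_sup_left (Subgroup.mem_zpowers tH)
  obtain ⟨_, ⟨p, rfl⟩, _, ⟨v, rfl⟩, rfl⟩ := Subgroup.mem_sup_of_normal_right.mp hg
  exact ⟨p, v, rfl⟩

lemma exists_eq_tH_zpow_mul_bH_zpow_mul_ι (g : HGrp) :
    ∃ (p q : ℤ) (w : F₂), NoLeadB w ∧ g = tH ^ p * bH ^ q * ι w := by
  obtain ⟨p, v, rfl⟩ := exists_eq_tH_zpow_mul_ι g
  obtain ⟨q, w, hw, rfl⟩ := FreeGroup.exists_eq_zpow_mul_of_head?_ne 1 v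
  exact ⟨p, q, w, hw, by rw [map_mul, map_zpow, ι_of_one, mul_assoc]⟩

lemma exists_noLeadB_mul_zpow {w : F₂} (hw : NoLeadB w) (hw₁ : w ≠ 1) :
    ∃ n : ℤ, n ≠ 0 ∧ NoLeadB (w * of 1 ^ n) := by
  obtain ⟨s, hs⟩ := FreeGroup.exists_toWord_mul_mk_singleton 1 w
  refine ⟨if s then 1 else -1, by split <;> decide, ?_⟩
  rw [NoLeadB, ← FreeGroup.mk_singleton_eq_zpow, hs,
    List.head?_append_of_ne_nil _ (mt FreeGroup.toWord_eq_nil_iff.mp hw₁)]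
  exact hw

theorem forall_map_mul_bH_zpow_eq_add_iff (π : HGrp → ℤ)
    (hπ : ∀ (p q : ℤ) (w : F₂), NoLeadB w → π (tH ^ p * bH ^ q * ι w) = q) (g : HGrp) :
    (∀ n : ℤ, π (g * bH ^ n) = π g + n) ↔ ∃ p q : ℤ, g = tH ^ p * bH ^ q := by
  have hπ₁ (p q : ℤ) : π (tH ^ p * bH ^ q) = q := by
    simpa using hπ p q 1 (by simp [NoLeadB])
  constructor
  · intro h
    obtain ⟨p, q, w, hw, rfl⟩ := exists_eq_tH_zpow_mul_bH_zpow_mul_ι g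
    by_cases hw₁ : w = 1
    · exact ⟨p, q, by rw [hw₁, map_one, mul_one]⟩
    obtain ⟨n, hn, hwn⟩ := exists_noLeadB_mul_zpow hw hw₁
    have hgn : tH ^ p * bH ^ q * ι w * bH ^ n = tH ^ p * bH ^ q * ι (w * of 1 ^ n) := by
      rw [map_mul, map_zpow, ι_of_one, mul_assoc]
    have := h n
    rw [hgn, hπ _ _ _ hwn, hπ _ _ _ hw] at this
    omega
  · rintro ⟨p, q, rfl⟩ n
    rw [mul_assoc, ← zpow_add, hπ₁, hπ₁]

lemma exists_inv_eq_tH_zpow_mul_bH_zpow {g : HGrp} (h : ∃ p q : ℤ, g = tH ^ p * bH ^ q) :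
    ∃ p q : ℤ, g⁻¹ = tH ^ p * bH ^ q := by
  obtain ⟨p, q, rfl⟩ := h
  exact ⟨-p, -q, by rw [mul_inv_rev, zpow_neg, zpow_neg, (commute_tH_bH.zpow_zpow p q).inv_inv.eq]⟩

lemma exists_inv_eq_tH_zpow_mul_bH_zpow_iff {g : HGrp} :
    (∃ p q : ℤ, g⁻¹ = tH ^ p * bH ^ q) ↔ ∃ p q : ℤ, g = tH ^ p * bH ^ q :=
  ⟨fun h => inv_inv g ▸ exists_inv_eq_tH_zpow_mul_bH_zpow h, exists_inv_eq_tH_zpow_mul_bH_zpow⟩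

/-- Parallelism of cosets is symmetric: for any `π : H → ℤ` reading off the exponent `q`
in the normal form `t^p · b^q · ι(w)` and any `u, u' ∈ H`, the restriction of `π_u` to
`u'⟨b⟩` is a translation iff the restriction of `π_{u'}` to `u⟨b⟩` is a translation, iff
`u' = u · t^p · b^q` for some `p, q ∈ ℤ`. -/
theorem parallel_symm (π : HGrp → ℤ)
    (hπ : ∀ (p q : ℤ) (w : F₂), NoLeadB w → π (tH ^ p * bH ^ q * ι w) = q)
    (u u' : HGrp) :
    ((∀ n : ℤ, π (u⁻¹ * u' * bH ^ n) = π (u⁻¹ * u') + n) ↔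
      (∀ n : ℤ, π (u'⁻¹ * u * bH ^ n) = π (u'⁻¹ * u) + n)) ∧
    ((∀ n : ℤ, π (u⁻¹ * u' * bH ^ n) = π (u⁻¹ * u') + n) ↔
      (∃ p q : ℤ, u' = u * tH ^ p * bH ^ q)) := by
  have hinv : u'⁻¹ * u = (u⁻¹ * u')⁻¹ := by group
  rw [forall_map_mul_bH_zpow_eq_add_iff π hπ, forall_map_mul_bH_zpow_eq_add_iff π hπ, hinv,
    exists_inv_eq_tH_zpow_mul_bH_zpow_iff]
  refine ⟨Iff.rfl, ?_⟩
  simp only [inv_mul_eq_iff_eq_mul, mul_assoc]
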